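/- Let F = C ∩ ⁺C be the category of free objects of an O-linear heart C and its tilt ⁺C. For any morphism f in F, one has Coim_F f = Coim_C f = Im_C f and Im_F f = Im_{⁺C} f = Coim_{⁺C} f, and f induces a canonical morphism Coim_F f → Im_F f. -/

import Mathlib

open CategoryTheory Limits Triangulated Pretriangulated

variable {O : Type*} [CommRing O] [IsDomain O] [IsDiscreteValuationRing O]
variable {D : Type*} [Category D] [Preadditive D] [Linear O D] [HasZeroObject D]
  [HasShift D ℤ] [∀ n : ℤ, (CategoryTheory.shiftFunctor D n).Additive] [Pretriangulated D]

/-- The cohomology functors associated to a t-structure with their characteristic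
properties. -/
structure TCohomology (t : TStructure D) where
  H : ℤ → D ⥤ D
  mem_heart_LE : ∀ (n : ℤ) (X : D), t.le 0 ((H n).obj X)
  mem_heart_GE : ∀ (n : ℤ) (X : D), t.ge 0 ((H n).obj X)
  le_iff : ∀ (n : ℤ) (X : D), t.le n X ↔ ∀ i : ℤ, n < i → IsZero ((H i).obj X)
  ge_iff : ∀ (n : ℤ) (X : D), t.ge n X ↔ ∀ i : ℤ, i < n → IsZero ((H i).obj X)

/-- The heart of a t-structure, as a predicate on objects. -/
def heartPred (t : TStructure D) : D → Prop := fun X => t.le 0 X ∧ t.ge 0 X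

/-! A morphism between objects of `t.ge 0` that is a monomorphism in the heart of `t` stays
one against every object of `t.le 0`: a map from `W ∈ t.le 0` factors through the heart
object `τ_{≥0} W`. Since `t'.le (-1) ⊆ t.le 0`, this makes the `C`-subobject `Coim_C f` of the
torsion-free `L'` torsion-free, so it lies in `F`; dually the `⁺C`-quotient `Im_{⁺C} f` of
`L ∈ C` lies in `t.le 0`, hence in `F`, using `t.ge 1 ⊆ t'.ge 0` and `τ_{≤0}`. The universal
properties in `F` are those in `C` and `⁺C` restricted to `F`, and the same truncation argument
shows that `Coim_C f ↪ L' ↠ Coker_{⁺C} f` vanishes, which yields `Coim_C f ⟶ Im_{⁺C} f`. -/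

namespace CategoryTheory

namespace ObjectProperty.FullSubcategory

variable {E : Type*} [Category E] {P : ObjectProperty E}

lemma hom_ext_of_epi {X Y : P.FullSubcategory} (e : X ⟶ Y) [Epi e] {B : E} (hB : P B)
    {b₁ b₂ : Y.obj ⟶ B} (h : e.hom ≫ b₁ = e.hom ≫ b₂) : b₁ = b₂ :=
  congrArg InducedCategory.Hom.hom
    ((cancel_epi e).1 (hom_ext _ h) : homMk (Y := ⟨B, hB⟩) b₁ = homMk b₂)

lemma hom_ext_of_mono {X Y : P.FullSubcategory} (m : X ⟶ Y) [Mono m] {B : E} (hB : P B)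
    {b₁ b₂ : B ⟶ X.obj} (h : b₁ ≫ m.hom = b₂ ≫ m.hom) : b₁ = b₂ :=
  congrArg InducedCategory.Hom.hom
    ((cancel_mono m).1 (hom_ext _ h) : homMk (X := ⟨B, hB⟩) b₁ = homMk b₂)

variable [HasZeroMorphisms E]

lemma eq_zero_of_hom_comp_eq_zero {X Y : P.FullSubcategory} (e : X ⟶ Y) [Epi e] {B : E}
    (hB : P B) {b : Y.obj ⟶ B} (h : e.hom ≫ b = 0) : b = 0 :=
  hom_ext_of_epi e hB (h.trans comp_zero.symm)

lemma eq_zero_of_comp_hom_eq_zero {X Y : P.FullSubcategory} (m : X ⟶ Y) [Mono m] {B : E}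
    (hB : P B) {b : B ⟶ X.obj} (h : b ≫ m.hom = 0) : b = 0 :=
  hom_ext_of_mono m hB (h.trans zero_comp.symm)

lemma existsUnique_cokernel_π_comp_eq {K X : P.FullSubcategory} (k : K ⟶ X) [HasCokernel k]
    {Z : E} (hZ : P Z) (g : X.obj ⟶ Z) (hg : k.hom ≫ g = 0) :
    ∃! u : (cokernel k).obj ⟶ Z, (cokernel.π k).hom ≫ u = g :=
  have hdesc := congrArg InducedCategory.Hom.hom
    (cokernel.π_desc k (homMk (Y := ⟨Z, hZ⟩) g) (hom_ext _ hg))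
  ⟨_, hdesc, fun _ hu => hom_ext_of_epi (cokernel.π k) hZ (hu.trans hdesc.symm)⟩

lemma existsUnique_comp_kernel_ι_eq {X Q : P.FullSubcategory} (q : X ⟶ Q) [HasKernel q]
    {Z : E} (hZ : P Z) (g : Z ⟶ X.obj) (hg : g ≫ q.hom = 0) :
    ∃! u : Z ⟶ (kernel q).obj, u ≫ (kernel.ι q).hom = g :=
  have hlift := congrArg InducedCategory.Hom.hom
    (kernel.lift_ι q (homMk (X := ⟨Z, hZ⟩) g) (hom_ext _ hg))
  ⟨_, hlift, fun _ hu => hom_ext_of_mono (kernel.ι q) hZ (hu.trans hlift.symm)⟩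

end ObjectProperty.FullSubcategory

section Abelian

/- `Z` need not be syntactically the instance coming from `Abelian E`: a full subcategory
with an abelian structure takes its kernels with the zero morphisms inherited from the ambient
category. The two agree, `HasZeroMorphisms E` being a subsingleton. -/

variable {E : Type*} [Category E] [Abelian E] [Z : HasZeroMorphisms E]

lemma Abelian.isIso_coimageImageComparison_of_hasZeroMorphisms {X Y : E} (f : X ⟶ Y)
    [HasKernel f] [HasCokernel f] [HasKernel (cokernel.π f)] [HasCokernel (kernel.ι f)] :
    IsIso (Abelian.coimageImageComparison f) := by
  obtain rfl : Z = Preadditive.preadditiveHasZeroMorphisms := Subsingleton.elim _ _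
  infer_instance

lemma Abelian.mono_factorThruCoimage_of_hasZeroMorphisms {X Y : E} (f : X ⟶ Y) [HasKernel f]
    [HasCokernel (kernel.ι f)] : Mono (Abelian.factorThruCoimage f) := by
  obtain rfl : Z = Preadditive.preadditiveHasZeroMorphisms := Subsingleton.elim _ _
  infer_instance

lemma Abelian.epi_factorThruImage_of_hasZeroMorphisms {X Y : E} (f : X ⟶ Y) [HasCokernel f]
    [HasKernel (cokernel.π f)] : Epi (Abelian.factorThruImage f) := by
  obtain rfl : Z = Preadditive.preadditiveHasZeroMorphisms := Subsingleton.elim _ _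
  infer_instance

end Abelian

namespace Triangulated.TStructure

variable (t : TStructure D)

lemma isGE_truncLT_obj_of_isGE (X : D) (a b : ℤ) [t.IsGE X a] :
    t.IsGE ((t.truncLT b).obj X) a := by
  have := t.isGE_of_ge ((t.truncGE b).obj X) (a - 1) a
  exact t.isGE₂ _ (inv_rot_of_distTriang _ (t.triangleLTGE_distinguished b X)) a
    (t.isGE_shift ((t.truncGE b).obj X) (a - 1) (-1) a) ‹t.IsGE X a›

lemma isLE_truncGE_obj_of_isLE (X : D) (a b : ℤ) [t.IsLE X b] :
    t.IsLE ((t.truncGE a).obj X) b := by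
  have := t.isLE_of_le ((t.truncLT a).obj X) b (b + 1)
  exact t.isLE₂ _ (rot_of_distTriang _ (t.triangleLTGE_distinguished a X)) b
    ‹t.IsLE X b›
    (t.isLE_shift ((t.truncLT a).obj X) (b + 1) 1 b)

lemma eq_zero_of_comp_eq_zero_of_heart_epi {Y X Z : D} [t.IsLE Y 0] [t.IsLE X 0] [t.IsGE Z 0]
    (e : Y ⟶ X) (he : ∀ B, heartPred t B → ∀ b : X ⟶ B, e ≫ b = 0 → b = 0)
    (h : X ⟶ Z) (hh : e ≫ h = 0) : h = 0 := by
  have : t.IsLE ((t.truncLT 1).obj Z) 0 := t.isLE_truncLT_obj _ _ _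
  have : t.IsGE ((t.truncLT 1).obj Z) 0 := t.isGE_truncLT_obj_of_isGE _ _ _
  have : t.IsLE Y (1 - 1) := by simpa
  have hZ₀ : heartPred t ((t.truncLT 1).obj Z) := ⟨t.le_of_isLE _ _, t.ge_of_isGE _ _⟩
  have hlift : e ≫ t.liftTruncLT h 0 1 rfl = 0 := t.to_truncLT_obj_ext (by simp [hh])
  rw [← t.liftTruncLT_ι h 0 1 rfl, he _ hZ₀ _ hlift, zero_comp]

lemma eq_zero_of_comp_eq_zero_of_heart_mono {W X Y : D} [t.IsLE W 0] [t.IsGE X 0] [t.IsGE Y 0]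
    (m : X ⟶ Y) (hm : ∀ B, heartPred t B → ∀ b : B ⟶ X, b ≫ m = 0 → b = 0)
    (a : W ⟶ X) (ha : a ≫ m = 0) : a = 0 := by
  have : t.IsLE ((t.truncGE 0).obj W) 0 := t.isLE_truncGE_obj_of_isLE _ _ _
  have hW₁ : heartPred t ((t.truncGE 0).obj W) := ⟨t.le_of_isLE _ _, t.ge_of_isGE _ _⟩
  have hdesc : t.descTruncGE a 0 ≫ m = 0 := t.from_truncGE_obj_ext (by simp [ha])
  rw [← t.π_descTruncGE a 0, hm _ hW₁ _ hdesc, comp_zero]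

lemma le_zero_of_le_neg_one (t' : TStructure D) (h : ∀ X, t'.le 0 X → t.le 1 X) {X : D}
    (hX : t'.le (-1) X) : t.le 0 X := by
  have : t.IsLE (X⟦(-1 : ℤ)⟧) 1 := ⟨h _ (t'.le_shift (-1) (-1) 0 (by norm_num) X hX)⟩
  have := t.isLE_of_shift X 0 (-1) 1
  exact t.le_of_isLE X 0

lemma ge_zero_of_heart_mono (t' : TStructure D) (hle : ∀ A, t'.le (-1) A → t.le 0 A)
    {X Y : D} (hX : heartPred t X) (hY : t.ge 0 Y) (hY' : t'.ge 0 Y) (m : X ⟶ Y)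
    (hm : ∀ B, heartPred t B → ∀ b : B ⟶ X, b ≫ m = 0 → b = 0) : t'.ge 0 X := by
  have : t.IsGE X 0 := ⟨hX.2⟩
  have : t.IsGE Y 0 := ⟨hY⟩
  have : t'.IsGE Y 0 := ⟨hY'⟩
  rw [t'.ge_iff_isGE, t'.isGE_iff_orthogonal (-1) 0 (by norm_num)]
  intro A a hA
  have : t.IsLE A 0 := ⟨hle A hA.le⟩
  exact t.eq_zero_of_comp_eq_zero_of_heart_mono m hm a (t'.zero (a ≫ m) (-1) 0)

lemma le_zero_of_heart_epi (t' : TStructure D) (hge : ∀ B, t.ge 1 B → t'.ge 0 B)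
    {Y X : D} (hX : heartPred t' X) (hY : t.le 0 Y) (hY' : t'.le 0 Y) (e : Y ⟶ X)
    (he : ∀ B, heartPred t' B → ∀ b : X ⟶ B, e ≫ b = 0 → b = 0) : t.le 0 X := by
  have : t'.IsLE X 0 := ⟨hX.1⟩
  have : t.IsLE Y 0 := ⟨hY⟩
  have : t'.IsLE Y 0 := ⟨hY'⟩
  rw [t.le_iff_isLE, t.isLE_iff_orthogonal 0 1 (by norm_num)]
  intro B b hB
  have : t'.IsGE B 0 := ⟨hge B hB.ge⟩
  exact t'.eq_zero_of_comp_eq_zero_of_heart_epi e he b (t.zero (e ≫ b) 0 1)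

end Triangulated.TStructure

end CategoryTheory

open ObjectProperty

theorem free_coimage_image_general
    (ϖ : O)
    (t t' : TStructure D) (c : TCohomology t)
    [Abelian (ObjectProperty.FullSubcategory (heartPred t))] [Abelian (ObjectProperty.FullSubcategory (heartPred t'))]
    -- `t'` is the tilt of `t` at the `ϖ`-torsion theory of its heart:
    (ht'le : ∀ X : D, t'.le 0 X ↔
      (t.le 1 X ∧ ∃ N : ℕ, (ϖ ^ N : O) • (𝟙 ((c.H 1).obj X)) = 0))
    (ht'ge : ∀ X : D, t'.ge 0 X ↔
      (t.ge 0 X ∧ Mono ((ϖ : O) • (𝟙 ((c.H 0).obj X)))))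
    (L L' : D) (hL : heartPred t L ∧ heartPred t' L)
    (hL' : heartPred t L' ∧ heartPred t' L') (f : L ⟶ L') :
    let fC : (⟨L, hL.1⟩ : ObjectProperty.FullSubcategory (heartPred t)) ⟶ ⟨L', hL'.1⟩ := ObjectProperty.homMk f
    let fP : (⟨L, hL.2⟩ : ObjectProperty.FullSubcategory (heartPred t')) ⟶ ⟨L', hL'.2⟩ := ObjectProperty.homMk f
    let CoimC : D := (Abelian.coimage fC).obj
    let ImP : D := (Abelian.image fP).obj
    let π : L ⟶ CoimC := (Abelian.coimage.π fC).hom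
    let ι : ImP ⟶ L' := (Abelian.image.ι fP).hom
    let κ : (kernel fC).obj ⟶ L := (kernel.ι fC).hom
    let ρ : L' ⟶ (cokernel fP).obj := (cokernel.π fP).hom
    -- Coim_C f = Im_C f and Im_{⁺C} f = Coim_{⁺C} f:
    (IsIso (Abelian.coimageImageComparison fC) ∧ IsIso (Abelian.coimageImageComparison fP)) ∧
    -- Coim_C f lies in F and is the coimage Coim_F f, i.e. the cokernel in F of Ker_F f ⟶ L:
    ((heartPred t CoimC ∧ heartPred t' CoimC) ∧
     (∀ (X : D), (heartPred t X ∧ heartPred t' X) → ∀ (g : L ⟶ X), κ ≫ g = 0 →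
        ∃! u : CoimC ⟶ X, π ≫ u = g)) ∧
    -- Im_{⁺C} f lies in F and is the image Im_F f, i.e. the kernel in F of L' ⟶ Coker_F f:
    ((heartPred t ImP ∧ heartPred t' ImP) ∧
     (∀ (X : D), (heartPred t X ∧ heartPred t' X) → ∀ (g : X ⟶ L'), g ≫ ρ = 0 →
        ∃! u : X ⟶ ImP, u ≫ ι = g)) ∧
    -- the canonical morphism Coim_F f ⟶ Im_F f:
    (∃ can : CoimC ⟶ ImP, π ≫ can ≫ ι = f) := by
  intro fC fP CoimC ImP π ι κ ρ
  have hCoim : heartPred t CoimC := (Abelian.coimage fC).property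
  have hIm' : heartPred t' ImP := (Abelian.image fP).property
  have hle : ∀ A, t'.le (-1) A → t.le 0 A := fun _ =>
    t.le_zero_of_le_neg_one t' fun X hX => ((ht'le X).1 hX).1
  have hge : ∀ B, t.ge 1 B → t'.ge 0 B := fun B hB =>
    (ht'ge B).2 ⟨t.ge_antitone (by norm_num) _ hB,
      ⟨fun g h _ => ((c.ge_iff 1 B).1 hB 0 one_pos).eq_of_tgt g h⟩⟩
  have hCoimLE' : t'.le 0 CoimC := by
    refine (ht'le CoimC).2 ⟨t.le_monotone (by norm_num) _ hCoim.1, 0, ?_⟩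
    rw [pow_zero, one_smul]
    exact ((c.le_iff 0 _).1 hCoim.1 1 one_pos).eq_of_src _ _
  have := Abelian.mono_factorThruCoimage_of_hasZeroMorphisms fC
  have := Abelian.epi_factorThruImage_of_hasZeroMorphisms fP
  have hCoim' : heartPred t' CoimC := ⟨hCoimLE', t.ge_zero_of_heart_mono t' hle hCoim hL'.1.2
    hL'.2.2 (Abelian.factorThruCoimage fC).hom
    fun _ hB _ => FullSubcategory.eq_zero_of_comp_hom_eq_zero _ hB⟩
  have hIm : heartPred t ImP := ⟨t.le_zero_of_heart_epi t' hge hIm' hL.1.1 hL.2.1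
    (Abelian.factorThruImage fP).hom fun _ hB _ => FullSubcategory.eq_zero_of_hom_comp_eq_zero _ hB,
    ((ht'ge ImP).1 hIm'.2).1⟩
  have hUnivP (X : D) (hX : heartPred t X ∧ heartPred t' X) (g : X ⟶ L') (hg : g ≫ ρ = 0) :
      ∃! u : X ⟶ ImP, u ≫ ι = g :=
    FullSubcategory.existsUnique_comp_kernel_ι_eq (cokernel.π fP) hX.2 g hg
  have hπm : π ≫ (Abelian.factorThruCoimage fC).hom = f :=
    congrArg (·.hom) (Abelian.coimage.fac fC)
  have hmρ : (Abelian.factorThruCoimage fC).hom ≫ ρ = 0 := by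
    have : t.IsLE L 0 := ⟨hL.1.1⟩
    have : t.IsLE CoimC 0 := ⟨hCoim.1⟩
    have : t.IsGE (cokernel fP).obj 0 := ⟨((ht'ge _).1 (cokernel fP).property.2).1⟩
    refine t.eq_zero_of_comp_eq_zero_of_heart_epi π
      (fun _ hB _ => FullSubcategory.eq_zero_of_hom_comp_eq_zero _ hB) _ ?_
    rw [← Category.assoc, hπm]
    exact congrArg (·.hom) (cokernel.condition fP)
  obtain ⟨can, hcan, -⟩ := hUnivP CoimC ⟨hCoim, hCoim'⟩ _ hmρ
  exact ⟨⟨Abelian.isIso_coimageImageComparison_of_hasZeroMorphisms fC,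
      Abelian.isIso_coimageImageComparison_of_hasZeroMorphisms fP⟩,
    ⟨⟨hCoim, hCoim'⟩, fun X hX g hg =>
      FullSubcategory.existsUnique_cokernel_π_comp_eq (kernel.ι fC) hX.1 g hg⟩,
    ⟨⟨hIm, hIm'⟩, hUnivP⟩, can, by rw [hcan, hπm]⟩

/-- for a morphism `f` of the category `F = C ∩ ⁺C` of free objects, one has
`Coim_F f = Coim_C f = Im_C f` and `Im_F f = Im_{⁺C} f = Coim_{⁺C} f`, and `f` induces a
canonical morphism `Coim_F f ⟶ Im_F f`.  Concretely: the coimage of `f` computed in `C`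
lies in `F` and satisfies the universal property of the coimage in `F` (coimage and image
agree in the abelian category `C`); dually the image computed in `⁺C` lies in `F` and is the
image in `F`; and `f` factors as `L ⟶ Coim_F f ⟶ Im_F f ⟶ L'`. -/
theorem free_coimage_image
    (ϖ : O) (hϖ : Irreducible ϖ)
    (t t' : TStructure D) (c : TCohomology t)
    [Abelian (ObjectProperty.FullSubcategory (heartPred t))] [Abelian (ObjectProperty.FullSubcategory (heartPred t'))]
    -- `t'` is the tilt of `t` at the `ϖ`-torsion theory of its heart:
    (ht'le : ∀ X : D, t'.le 0 X ↔
      (t.le 1 X ∧ ∃ N : ℕ, (ϖ ^ N : O) • (𝟙 ((c.H 1).obj X)) = 0))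
    (ht'ge : ∀ X : D, t'.ge 0 X ↔
      (t.ge 0 X ∧ Mono ((ϖ : O) • (𝟙 ((c.H 0).obj X)))))
    (L L' : D) (hL : heartPred t L ∧ heartPred t' L)
    (hL' : heartPred t L' ∧ heartPred t' L') (f : L ⟶ L') :
    let fC : (⟨L, hL.1⟩ : ObjectProperty.FullSubcategory (heartPred t)) ⟶ ⟨L', hL'.1⟩ := ObjectProperty.homMk f
    let fP : (⟨L, hL.2⟩ : ObjectProperty.FullSubcategory (heartPred t')) ⟶ ⟨L', hL'.2⟩ := ObjectProperty.homMk f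
    let CoimC : D := (Abelian.coimage fC).obj
    let ImP : D := (Abelian.image fP).obj
    let π : L ⟶ CoimC := (Abelian.coimage.π fC).hom
    let ι : ImP ⟶ L' := (Abelian.image.ι fP).hom
    let κ : (kernel fC).obj ⟶ L := (kernel.ι fC).hom
    let ρ : L' ⟶ (cokernel fP).obj := (cokernel.π fP).hom
    -- Coim_C f = Im_C f and Im_{⁺C} f = Coim_{⁺C} f:
    (IsIso (Abelian.coimageImageComparison fC) ∧ IsIso (Abelian.coimageImageComparison fP)) ∧
    -- Coim_C f lies in F and is the coimage Coim_F f, i.e. the cokernel in F of Ker_F f ⟶ L: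
    ((heartPred t CoimC ∧ heartPred t' CoimC) ∧
     (∀ (X : D), (heartPred t X ∧ heartPred t' X) → ∀ (g : L ⟶ X), κ ≫ g = 0 →
        ∃! u : CoimC ⟶ X, π ≫ u = g)) ∧
    -- Im_{⁺C} f lies in F and is the image Im_F f, i.e. the kernel in F of L' ⟶ Coker_F f:
    ((heartPred t ImP ∧ heartPred t' ImP) ∧
     (∀ (X : D), (heartPred t X ∧ heartPred t' X) → ∀ (g : X ⟶ L'), g ≫ ρ = 0 →
        ∃! u : X ⟶ ImP, u ≫ ι = g)) ∧
    -- the canonical morphism Coim_F f ⟶ Im_F f: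
    (∃ can : CoimC ⟶ ImP, π ≫ can ≫ ι = f) :=
  free_coimage_image_general ϖ t t' c ht'le ht'ge L L' hL hL' f
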